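/- Consider regular 16-run designs with two four-level factors and two two-level factors (regular 4^2 2^2 designs) of resolution at least III, represented by two-dimensional subspaces U_1, U_2 of (ZMod 2)^4 with U_1 ∩ U_2 = {0} (so (ZMod 2)^4 = U_1 ⊕ U_2) together with distinct vectors w_1, w_2 ∈ (ZMod 2)^4 not belonging to U_1 ∪ U_2. Call two such designs isomorphic if there exist g ∈ GL(4, ZMod 2), a permutation τ of {1, 2} and a permutation σ of {1, 2} with g(U_t) = U'_{τ(t)} and g(w_i) = w'_{σ(i)} for all t, i. Then there are exactly 2 isomorphism classes of such designs. -/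

import Mathlib

/-- A regular 16-run design with two four-level factors and `n` two-level factors
(a regular `4^2 2^{n-p}` design) of resolution at least III: two-dimensional subspaces
`U 0, U 1` of `(ZMod 2)^4` intersecting only in `0` (so `(ZMod 2)^4 = U 0 ⊕ U 1`),
together with pairwise distinct vectors `w i` belonging to neither `U 0` nor `U 1`. -/
def FTL2Design (n : ℕ) : Type :=
  {Uw : (Fin 2 → Submodule (ZMod 2) (Fin 4 → ZMod 2)) × (Fin n → Fin 4 → ZMod 2) //
    (∀ t, Module.finrank (ZMod 2) (Uw.1 t) = 2) ∧
      Uw.1 0 ⊓ Uw.1 1 = ⊥ ∧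
      Function.Injective Uw.2 ∧
      ∀ i, Uw.2 i ∉ Uw.1 0 ∧ Uw.2 i ∉ Uw.1 1}

/-- Isomorphism of regular `4^2 2^{n-p}` designs: a linear automorphism `g` of
`(ZMod 2)^4`, a permutation `τ` of the two subspaces and a permutation `σ` of the
two-level factors with `g (U t) = U' (τ t)` and `g (w i) = w' (σ i)` for all `t, i`. -/
def FTL2DesignIso {n : ℕ} (D D' : FTL2Design n) : Prop :=
  ∃ (g : (Fin 4 → ZMod 2) ≃ₗ[ZMod 2] (Fin 4 → ZMod 2)) (τ : Equiv.Perm (Fin 2))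
      (σ : Equiv.Perm (Fin n)),
    (∀ t, Submodule.map g.toLinearMap (D.1.1 t) = D'.1.1 (τ t)) ∧
      ∀ i, g (D.1.2 i) = D'.1.2 (σ i)

abbrev Vec := Fin 4 → ZMod 2

def U0std : Submodule (ZMod 2) Vec where
  carrier := {x | x 2 = 0 ∧ x 3 = 0}
  add_mem' := by rintro a b ⟨h1,h2⟩ ⟨h3,h4⟩; simp_all [Pi.add_apply]
  zero_mem' := by simp
  smul_mem' := by rintro c a ⟨h1,h2⟩; constructor <;> simp [h1,h2]

def U1std : Submodule (ZMod 2) Vec where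
  carrier := {x | x 0 = 0 ∧ x 1 = 0}
  add_mem' := by rintro a b ⟨h1,h2⟩ ⟨h3,h4⟩; simp_all [Pi.add_apply]
  zero_mem' := by simp
  smul_mem' := by rintro c a ⟨h1,h2⟩; constructor <;> simp [h1,h2]

lemma mem_U0std {x : Vec} : x ∈ U0std ↔ x 2 = 0 ∧ x 3 = 0 := Iff.rfl
lemma mem_U1std {x : Vec} : x ∈ U1std ↔ x 0 = 0 ∧ x 1 = 0 := Iff.rfl

def eq0 : U0std ≃ₗ[ZMod 2] (Fin 2 → ZMod 2) where
  toFun u := ![u.1 0, u.1 1]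
  invFun v := ⟨![v 0, v 1, 0, 0], by constructor <;> rfl⟩
  map_add' u v := by funext i; fin_cases i <;> rfl
  map_smul' c u := by funext i; fin_cases i <;> rfl
  left_inv u := by
    ext i
    fin_cases i
    · rfl
    · rfl
    · exact (u.2.1).symm
    · exact (u.2.2).symm
  right_inv v := by funext i; fin_cases i <;> rfl

def eq1 : U1std ≃ₗ[ZMod 2] (Fin 2 → ZMod 2) where
  toFun u := ![u.1 2, u.1 3]
  invFun v := ⟨![0, 0, v 0, v 1], by constructor <;> rfl⟩
  map_add' u v := by funext i; fin_cases i <;> rfl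
  map_smul' c u := by funext i; fin_cases i <;> rfl
  left_inv u := by
    ext i
    fin_cases i
    · exact (u.2.1).symm
    · exact (u.2.2).symm
    · rfl
    · rfl
  right_inv v := by funext i; fin_cases i <;> rfl

lemma finrank_U0std : Module.finrank (ZMod 2) U0std = 2 := by
  rw [eq0.finrank_eq, Module.finrank_fin_fun]

lemma finrank_U1std : Module.finrank (ZMod 2) U1std = 2 := by
  rw [eq1.finrank_eq, Module.finrank_fin_fun]

lemma inf_std : U0std ⊓ U1std = ⊥ := by
  ext x
  simp only [Submodule.mem_inf, Submodule.mem_bot, mem_U0std, mem_U1std]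
  constructor
  · rintro ⟨⟨h2,h3⟩,⟨h0,h1⟩⟩; funext i; fin_cases i <;> assumption
  · rintro rfl; simp

lemma isCompl_std : IsCompl U0std U1std := by
  constructor
  · rw [disjoint_iff, inf_std]
  · rw [codisjoint_iff, eq_top_iff]
    rintro x -
    have : x = ![x 0, x 1, 0, 0] + ![0,0,x 2, x 3] := by
      funext i; fin_cases i <;> simp
    rw [this]
    exact Submodule.add_mem_sup ⟨rfl, rfl⟩ ⟨rfl, rfl⟩

lemma iso_symm {n : ℕ} {D E : FTL2Design n} (h : FTL2DesignIso D E) : FTL2DesignIso E D := by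
  obtain ⟨g, τ, σ, hU, hw⟩ := h
  refine ⟨g.symm, τ⁻¹, σ⁻¹, fun t => ?_, fun i => ?_⟩
  · have h1 := hU (τ⁻¹ t)
    rw [Equiv.Perm.coe_inv, Equiv.apply_symm_apply] at h1
    rw [← h1, ← Submodule.map_comp]
    simp
  · have h1 := hw (σ⁻¹ i)
    rw [Equiv.Perm.coe_inv, Equiv.apply_symm_apply] at h1
    rw [← h1]
    simp

lemma iso_trans {n : ℕ} {D E F : FTL2Design n} (h : FTL2DesignIso D E) (h' : FTL2DesignIso E F) :
    FTL2DesignIso D F := by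
  obtain ⟨g, τ, σ, hU, hw⟩ := h
  obtain ⟨g', τ', σ', hU', hw'⟩ := h'
  refine ⟨g.trans g', τ.trans τ', σ.trans σ', fun t => ?_, fun i => ?_⟩
  · have : (g.trans g').toLinearMap = g'.toLinearMap.comp g.toLinearMap := rfl
    rw [this, Submodule.map_comp, hU, hU']
    rfl
  · have : (g.trans g') (D.1.2 i) = g' (g (D.1.2 i)) := rfl
    rw [this, hw, hw']
    rfl

lemma g_maps (p q p' q' : Submodule (ZMod 2) Vec) (h : IsCompl p q) (h' : IsCompl p' q')
    (e0 : p ≃ₗ[ZMod 2] p') (e1 : q ≃ₗ[ZMod 2] q') {x : Vec} (hx : x ∈ p) :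
    ((Submodule.prodEquivOfIsCompl p q h).symm.trans ((e0.prodCongr e1).trans
      (Submodule.prodEquivOfIsCompl p' q' h'))) x ∈ p' := by
  simp only [LinearEquiv.trans_apply]
  rw [show x = ((⟨x, hx⟩ : p) : Vec) from rfl, Submodule.prodEquivOfIsCompl_symm_apply_left]
  rw [show (e0.prodCongr e1) ((⟨x, hx⟩ : p), (0 : q)) = (e0 ⟨x, hx⟩, (0:q')) by
    simp [LinearEquiv.prodCongr_apply]]
  rw [Submodule.coe_prodEquivOfIsCompl']
  simp

lemma g_maps' (p q p' q' : Submodule (ZMod 2) Vec) (h : IsCompl p q) (h' : IsCompl p' q')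
    (e0 : p ≃ₗ[ZMod 2] p') (e1 : q ≃ₗ[ZMod 2] q') {x : Vec} (hx : x ∈ q) :
    ((Submodule.prodEquivOfIsCompl p q h).symm.trans ((e0.prodCongr e1).trans
      (Submodule.prodEquivOfIsCompl p' q' h'))) x ∈ q' := by
  simp only [LinearEquiv.trans_apply]
  rw [show x = ((⟨x, hx⟩ : q) : Vec) from rfl, Submodule.prodEquivOfIsCompl_symm_apply_right]
  rw [show (e0.prodCongr e1) ((0 : p), (⟨x, hx⟩ : q)) = ((0:p'), e1 ⟨x, hx⟩) by
    simp [LinearEquiv.prodCongr_apply]]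
  rw [Submodule.coe_prodEquivOfIsCompl']
  simp

lemma standardize (D : FTL2Design 2) :
    ∃ E : FTL2Design 2, FTL2DesignIso D E ∧ E.1.1 0 = U0std ∧ E.1.1 1 = U1std := by
  obtain ⟨⟨U, w⟩, hr, hinf, hinj, hw⟩ := D
  have hsup : U 0 ⊔ U 1 = ⊤ := by
    apply Submodule.eq_top_of_finrank_eq
    have h4 := Submodule.finrank_sup_add_finrank_inf_eq (U 0) (U 1)
    rw [hinf, finrank_bot, hr 0, hr 1, Module.finrank_fin_fun] at *
    omega
  have hc : IsCompl (U 0) (U 1) := by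
    constructor
    · rw [disjoint_iff, hinf]
    · rw [codisjoint_iff, hsup]
  have e0' : U0std ≃ₗ[ZMod 2] U 0 :=
    LinearEquiv.ofFinrankEq _ _ (by rw [finrank_U0std, hr 0])
  have e1' : U1std ≃ₗ[ZMod 2] U 1 :=
    LinearEquiv.ofFinrankEq _ _ (by rw [finrank_U1std, hr 1])
  set g : Vec ≃ₗ[ZMod 2] Vec :=
    (Submodule.prodEquivOfIsCompl U0std U1std isCompl_std).symm.trans ((e0'.prodCongr e1').trans
      (Submodule.prodEquivOfIsCompl (U 0) (U 1) hc)) with hg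
  have hmap0 : Submodule.map g.toLinearMap U0std = U 0 := by
    apply Submodule.eq_of_le_of_finrank_eq
    · rintro x ⟨y, hy, rfl⟩
      exact g_maps _ _ _ _ _ _ e0' e1' hy
    · rw [LinearEquiv.finrank_map_eq, finrank_U0std, hr 0]
  have hmap1 : Submodule.map g.toLinearMap U1std = U 1 := by
    apply Submodule.eq_of_le_of_finrank_eq
    · rintro x ⟨y, hy, rfl⟩
      exact g_maps' _ _ _ _ _ _ e0' e1' hy
    · rw [LinearEquiv.finrank_map_eq, finrank_U1std, hr 1]
  have hsmap0 : Submodule.map g.symm.toLinearMap (U 0) = U0std := by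
    rw [← hmap0, ← Submodule.map_comp]; simp
  have hsmap1 : Submodule.map g.symm.toLinearMap (U 1) = U1std := by
    rw [← hmap1, ← Submodule.map_comp]; simp
  refine ⟨⟨(![U0std, U1std], fun i => g.symm (w i)), ?_, ?_, ?_, ?_⟩, ?_, rfl, rfl⟩
  · intro t; fin_cases t
    · exact finrank_U0std
    · exact finrank_U1std
  · exact inf_std
  · intro i j h
    exact hinj (g.symm.injective h)
  · intro i
    constructor
    · intro hmem
      apply (hw i).1
      show w i ∈ U 0
      have : w i = g (g.symm (w i)) := (g.apply_symm_apply _).symm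
      rw [this, ← hmap0]
      exact Submodule.mem_map_of_mem hmem
    · intro hmem
      apply (hw i).2
      show w i ∈ U 1
      have : w i = g (g.symm (w i)) := (g.apply_symm_apply _).symm
      rw [this, ← hmap1]
      exact Submodule.mem_map_of_mem hmem
  · refine ⟨g.symm, 1, 1, fun t => ?_, fun i => rfl⟩
    fin_cases t
    · exact hsmap0
    · exact hsmap1

lemma matEquiv_lemma (M N : Matrix (Fin 4) (Fin 4) (ZMod 2)) (hMN : M * N = 1) (x : Vec) :
    M.mulVec (N.mulVec x) = x := by
  rw [Matrix.mulVec_mulVec, hMN, Matrix.one_mulVec]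

def matEquiv (M N : Matrix (Fin 4) (Fin 4) (ZMod 2)) (hMN : M * N = 1) :
    Vec ≃ₗ[ZMod 2] Vec :=
  LinearEquiv.ofLinear M.mulVecLin N.mulVecLin
    (by rw [← Matrix.mulVecLin_mul, hMN, Matrix.mulVecLin_one])
    (by rw [← Matrix.mulVecLin_mul, mul_eq_one_comm.mp hMN, Matrix.mulVecLin_one])

lemma map_U0std_eq (M N : Matrix (Fin 4) (Fin 4) (ZMod 2)) (hMN : M * N = 1)
    (U : Submodule (ZMod 2) Vec) (PU : Vec → Prop) (hPU : ∀ x, x ∈ U ↔ PU x)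
    (hf : ∀ y : Vec, y 2 = 0 ∧ y 3 = 0 → PU (M.mulVec y))
    (hb : ∀ x : Vec, PU x → (N.mulVec x) 2 = 0 ∧ (N.mulVec x) 3 = 0) :
    Submodule.map (matEquiv M N hMN).toLinearMap U0std = U := by
  ext x
  simp only [Submodule.mem_map, hPU]
  constructor
  · rintro ⟨y, hy, rfl⟩
    exact hf y hy
  · intro hx
    exact ⟨N.mulVec x, hb x hx, matEquiv_lemma M N hMN x⟩

lemma map_U1std_eq (M N : Matrix (Fin 4) (Fin 4) (ZMod 2)) (hMN : M * N = 1)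
    (U : Submodule (ZMod 2) Vec) (PU : Vec → Prop) (hPU : ∀ x, x ∈ U ↔ PU x)
    (hf : ∀ y : Vec, y 0 = 0 ∧ y 1 = 0 → PU (M.mulVec y))
    (hb : ∀ x : Vec, PU x → (N.mulVec x) 0 = 0 ∧ (N.mulVec x) 1 = 0) :
    Submodule.map (matEquiv M N hMN).toLinearMap U1std = U := by
  ext x
  simp only [Submodule.mem_map, hPU]
  constructor
  · rintro ⟨y, hy, rfl⟩
    exact hf y hy
  · intro hx
    exact ⟨N.mulVec x, hb x hx, matEquiv_lemma M N hMN x⟩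

lemma iso_std_id (D E : FTL2Design 2)
    (h0 : D.1.1 0 = U0std) (h1 : D.1.1 1 = U1std)
    (e0 : E.1.1 0 = U0std) (e1 : E.1.1 1 = U1std)
    (M N : Matrix (Fin 4) (Fin 4) (ZMod 2)) (hMN : M * N = 1)
    (hf0 : ∀ y : Vec, y 2 = 0 ∧ y 3 = 0 → (M.mulVec y) 2 = 0 ∧ (M.mulVec y) 3 = 0)
    (hb0 : ∀ x : Vec, x 2 = 0 ∧ x 3 = 0 → (N.mulVec x) 2 = 0 ∧ (N.mulVec x) 3 = 0)
    (hf1 : ∀ y : Vec, y 0 = 0 ∧ y 1 = 0 → (M.mulVec y) 0 = 0 ∧ (M.mulVec y) 1 = 0)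
    (hb1 : ∀ x : Vec, x 0 = 0 ∧ x 1 = 0 → (N.mulVec x) 0 = 0 ∧ (N.mulVec x) 1 = 0)
    (hw0 : M.mulVec (D.1.2 0) = E.1.2 0)
    (hw1 : M.mulVec (D.1.2 1) = E.1.2 1) :
    FTL2DesignIso D E := by
  refine ⟨matEquiv M N hMN, 1, 1, fun t => ?_, fun i => ?_⟩
  · fin_cases t
    · show Submodule.map _ (D.1.1 0) = E.1.1 0
      rw [h0, e0]
      exact map_U0std_eq M N hMN U0std _ (fun x => mem_U0std) hf0 hb0
    · show Submodule.map _ (D.1.1 1) = E.1.1 1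
      rw [h1, e1]
      exact map_U1std_eq M N hMN U1std _ (fun x => mem_U1std) hf1 hb1
  · fin_cases i
    · exact hw0
    · exact hw1

lemma iso_std_swap (D E : FTL2Design 2)
    (h0 : D.1.1 0 = U0std) (h1 : D.1.1 1 = U1std)
    (e0 : E.1.1 0 = U0std) (e1 : E.1.1 1 = U1std)
    (M N : Matrix (Fin 4) (Fin 4) (ZMod 2)) (hMN : M * N = 1)
    (hf0 : ∀ y : Vec, y 2 = 0 ∧ y 3 = 0 → (M.mulVec y) 0 = 0 ∧ (M.mulVec y) 1 = 0)
    (hb0 : ∀ x : Vec, x 0 = 0 ∧ x 1 = 0 → (N.mulVec x) 2 = 0 ∧ (N.mulVec x) 3 = 0)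
    (hf1 : ∀ y : Vec, y 0 = 0 ∧ y 1 = 0 → (M.mulVec y) 2 = 0 ∧ (M.mulVec y) 3 = 0)
    (hb1 : ∀ x : Vec, x 2 = 0 ∧ x 3 = 0 → (N.mulVec x) 0 = 0 ∧ (N.mulVec x) 1 = 0)
    (hw0 : M.mulVec (D.1.2 0) = E.1.2 0)
    (hw1 : M.mulVec (D.1.2 1) = E.1.2 1) :
    FTL2DesignIso D E := by
  refine ⟨matEquiv M N hMN, Equiv.swap 0 1, 1, fun t => ?_, fun i => ?_⟩
  · fin_cases t
    · show Submodule.map _ (D.1.1 0) = E.1.1 (Equiv.swap (0:Fin 2) 1 0)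
      rw [Equiv.swap_apply_left, h0, e1]
      exact map_U0std_eq M N hMN U1std _ (fun x => mem_U1std) hf0 hb0
    · show Submodule.map _ (D.1.1 1) = E.1.1 (Equiv.swap (0:Fin 2) 1 1)
      rw [Equiv.swap_apply_right, h1, e0]
      exact map_U1std_eq M N hMN U0std _ (fun x => mem_U0std) hf1 hb1
  · fin_cases i
    · exact hw0
    · exact hw1

def repA : FTL2Design 2 :=
  ⟨(![U0std, U1std], ![![1,0,1,0], ![1,0,0,1]]), by
    refine ⟨?_, inf_std, by decide, ?_⟩
    · intro t; fin_cases t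
      · exact finrank_U0std
      · exact finrank_U1std
    · intro i
      fin_cases i <;>
        exact ⟨fun h => by have := mem_U0std.mp h; revert this; decide,
               fun h => by have := mem_U1std.mp h; revert this; decide⟩⟩

def repB : FTL2Design 2 :=
  ⟨(![U0std, U1std], ![![1,0,1,0], ![0,1,0,1]]), by
    refine ⟨?_, inf_std, by decide, ?_⟩
    · intro t; fin_cases t
      · exact finrank_U0std
      · exact finrank_U1std
    · intro i
      fin_cases i <;>
        exact ⟨fun h => by have := mem_U0std.mp h; revert this; decide,
               fun h => by have := mem_U1std.mp h; revert this; decide⟩⟩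

lemma nine (v : Vec) (hv0 : ¬(v 2 = 0 ∧ v 3 = 0)) (hv1 : ¬(v 0 = 0 ∧ v 1 = 0)) :
    v = ![1,0,1,0] ∨ v = ![1,0,0,1] ∨ v = ![1,0,1,1] ∨ v = ![0,1,1,0] ∨ v = ![0,1,0,1] ∨ v = ![0,1,1,1] ∨ v = ![1,1,1,0] ∨ v = ![1,1,0,1] ∨ v = ![1,1,1,1] := by
  revert hv0 hv1
  revert v
  decide

lemma std_classify (D : FTL2Design 2) (h0 : D.1.1 0 = U0std) (h1 : D.1.1 1 = U1std) :
    FTL2DesignIso D repA ∨ FTL2DesignIso D repB := by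
  have hne : D.1.2 0 ≠ D.1.2 1 := fun h => absurd (D.2.2.2.1 h) (by decide)
  have m00 : D.1.2 0 ∉ D.1.1 0 := (D.2.2.2.2 0).1
  have m01 : D.1.2 0 ∉ D.1.1 1 := (D.2.2.2.2 0).2
  have m10 : D.1.2 1 ∉ D.1.1 0 := (D.2.2.2.2 1).1
  have m11 : D.1.2 1 ∉ D.1.1 1 := (D.2.2.2.2 1).2
  rw [h0] at m00 m10
  rw [h1] at m01 m11
  have hw0 := nine (D.1.2 0) (fun hc => m00 (mem_U0std.mpr hc)) (fun hc => m01 (mem_U1std.mpr hc))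
  have hw1 := nine (D.1.2 1) (fun hc => m10 (mem_U0std.mpr hc)) (fun hc => m11 (mem_U1std.mpr hc))
  rcases hw0 with hA|hA|hA|hA|hA|hA|hA|hA|hA
  · rcases hw1 with hB|hB|hB|hB|hB|hB|hB|hB|hB
    · exact absurd (hA.trans hB.symm) hne
    · exact Or.inl (iso_std_id D repA h0 h1 rfl rfl !![1,0,0,0;0,1,0,0;0,0,1,0;0,0,0,1] !![1,0,0,0;0,1,0,0;0,0,1,0;0,0,0,1] (by decide) (by decide) (by decide) (by decide) (by decide) (by rw [hA]; decide) (by rw [hB]; decide))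
    · exact Or.inl (iso_std_id D repA h0 h1 rfl rfl !![1,0,0,0;0,1,0,0;0,0,1,1;0,0,0,1] !![1,0,0,0;0,1,0,0;0,0,1,1;0,0,0,1] (by decide) (by decide) (by decide) (by decide) (by decide) (by rw [hA]; decide) (by rw [hB]; decide))
    · exact Or.inl (iso_std_swap D repA h0 h1 rfl rfl !![0,0,1,0;0,0,0,1;1,0,0,0;0,1,0,0] !![0,0,1,0;0,0,0,1;1,0,0,0;0,1,0,0] (by decide) (by decide) (by decide) (by decide) (by decide) (by rw [hA]; decide) (by rw [hB]; decide))
    · exact Or.inr (iso_std_id D repB h0 h1 rfl rfl !![1,0,0,0;0,1,0,0;0,0,1,0;0,0,0,1] !![1,0,0,0;0,1,0,0;0,0,1,0;0,0,0,1] (by decide) (by decide) (by decide) (by decide) (by decide) (by rw [hA]; decide) (by rw [hB]; decide))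
    · exact Or.inr (iso_std_id D repB h0 h1 rfl rfl !![1,0,0,0;0,1,0,0;0,0,1,1;0,0,0,1] !![1,0,0,0;0,1,0,0;0,0,1,1;0,0,0,1] (by decide) (by decide) (by decide) (by decide) (by decide) (by rw [hA]; decide) (by rw [hB]; decide))
    · exact Or.inl (iso_std_swap D repA h0 h1 rfl rfl !![0,0,1,0;0,0,0,1;1,1,0,0;0,1,0,0] !![0,0,1,1;0,0,0,1;1,0,0,0;0,1,0,0] (by decide) (by decide) (by decide) (by decide) (by decide) (by rw [hA]; decide) (by rw [hB]; decide))
    · exact Or.inr (iso_std_id D repB h0 h1 rfl rfl !![1,1,0,0;0,1,0,0;0,0,1,0;0,0,0,1] !![1,1,0,0;0,1,0,0;0,0,1,0;0,0,0,1] (by decide) (by decide) (by decide) (by decide) (by decide) (by rw [hA]; decide) (by rw [hB]; decide))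
    · exact Or.inr (iso_std_id D repB h0 h1 rfl rfl !![1,1,0,0;0,1,0,0;0,0,1,1;0,0,0,1] !![1,1,0,0;0,1,0,0;0,0,1,1;0,0,0,1] (by decide) (by decide) (by decide) (by decide) (by decide) (by rw [hA]; decide) (by rw [hB]; decide))
  · rcases hw1 with hB|hB|hB|hB|hB|hB|hB|hB|hB
    · exact Or.inl (iso_std_id D repA h0 h1 rfl rfl !![1,0,0,0;0,1,0,0;0,0,0,1;0,0,1,0] !![1,0,0,0;0,1,0,0;0,0,0,1;0,0,1,0] (by decide) (by decide) (by decide) (by decide) (by decide) (by rw [hA]; decide) (by rw [hB]; decide))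
    · exact absurd (hA.trans hB.symm) hne
    · exact Or.inl (iso_std_id D repA h0 h1 rfl rfl !![1,0,0,0;0,1,0,0;0,0,1,1;0,0,1,0] !![1,0,0,0;0,1,0,0;0,0,0,1;0,0,1,1] (by decide) (by decide) (by decide) (by decide) (by decide) (by rw [hA]; decide) (by rw [hB]; decide))
    · exact Or.inr (iso_std_id D repB h0 h1 rfl rfl !![1,0,0,0;0,1,0,0;0,0,0,1;0,0,1,0] !![1,0,0,0;0,1,0,0;0,0,0,1;0,0,1,0] (by decide) (by decide) (by decide) (by decide) (by decide) (by rw [hA]; decide) (by rw [hB]; decide))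
    · exact Or.inl (iso_std_swap D repA h0 h1 rfl rfl !![0,0,0,1;0,0,1,0;1,0,0,0;0,1,0,0] !![0,0,1,0;0,0,0,1;0,1,0,0;1,0,0,0] (by decide) (by decide) (by decide) (by decide) (by decide) (by rw [hA]; decide) (by rw [hB]; decide))
    · exact Or.inr (iso_std_id D repB h0 h1 rfl rfl !![1,0,0,0;0,1,0,0;0,0,1,1;0,0,1,0] !![1,0,0,0;0,1,0,0;0,0,0,1;0,0,1,1] (by decide) (by decide) (by decide) (by decide) (by decide) (by rw [hA]; decide) (by rw [hB]; decide))
    · exact Or.inr (iso_std_id D repB h0 h1 rfl rfl !![1,1,0,0;0,1,0,0;0,0,0,1;0,0,1,0] !![1,1,0,0;0,1,0,0;0,0,0,1;0,0,1,0] (by decide) (by decide) (by decide) (by decide) (by decide) (by rw [hA]; decide) (by rw [hB]; decide))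
    · exact Or.inl (iso_std_swap D repA h0 h1 rfl rfl !![0,0,0,1;0,0,1,0;1,1,0,0;0,1,0,0] !![0,0,1,1;0,0,0,1;0,1,0,0;1,0,0,0] (by decide) (by decide) (by decide) (by decide) (by decide) (by rw [hA]; decide) (by rw [hB]; decide))
    · exact Or.inr (iso_std_id D repB h0 h1 rfl rfl !![1,1,0,0;0,1,0,0;0,0,1,1;0,0,1,0] !![1,1,0,0;0,1,0,0;0,0,0,1;0,0,1,1] (by decide) (by decide) (by decide) (by decide) (by decide) (by rw [hA]; decide) (by rw [hB]; decide))
  · rcases hw1 with hB|hB|hB|hB|hB|hB|hB|hB|hB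
    · exact Or.inl (iso_std_id D repA h0 h1 rfl rfl !![1,0,0,0;0,1,0,0;0,0,0,1;0,0,1,1] !![1,0,0,0;0,1,0,0;0,0,1,1;0,0,1,0] (by decide) (by decide) (by decide) (by decide) (by decide) (by rw [hA]; decide) (by rw [hB]; decide))
    · exact Or.inl (iso_std_id D repA h0 h1 rfl rfl !![1,0,0,0;0,1,0,0;0,0,1,0;0,0,1,1] !![1,0,0,0;0,1,0,0;0,0,1,0;0,0,1,1] (by decide) (by decide) (by decide) (by decide) (by decide) (by rw [hA]; decide) (by rw [hB]; decide))
    · exact absurd (hA.trans hB.symm) hne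
    · exact Or.inr (iso_std_id D repB h0 h1 rfl rfl !![1,0,0,0;0,1,0,0;0,0,0,1;0,0,1,1] !![1,0,0,0;0,1,0,0;0,0,1,1;0,0,1,0] (by decide) (by decide) (by decide) (by decide) (by decide) (by rw [hA]; decide) (by rw [hB]; decide))
    · exact Or.inr (iso_std_id D repB h0 h1 rfl rfl !![1,0,0,0;0,1,0,0;0,0,1,0;0,0,1,1] !![1,0,0,0;0,1,0,0;0,0,1,0;0,0,1,1] (by decide) (by decide) (by decide) (by decide) (by decide) (by rw [hA]; decide) (by rw [hB]; decide))
    · exact Or.inl (iso_std_swap D repA h0 h1 rfl rfl !![0,0,0,1;0,0,1,1;1,0,0,0;0,1,0,0] !![0,0,1,0;0,0,0,1;1,1,0,0;1,0,0,0] (by decide) (by decide) (by decide) (by decide) (by decide) (by rw [hA]; decide) (by rw [hB]; decide))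
    · exact Or.inr (iso_std_id D repB h0 h1 rfl rfl !![1,1,0,0;0,1,0,0;0,0,0,1;0,0,1,1] !![1,1,0,0;0,1,0,0;0,0,1,1;0,0,1,0] (by decide) (by decide) (by decide) (by decide) (by decide) (by rw [hA]; decide) (by rw [hB]; decide))
    · exact Or.inr (iso_std_id D repB h0 h1 rfl rfl !![1,1,0,0;0,1,0,0;0,0,1,0;0,0,1,1] !![1,1,0,0;0,1,0,0;0,0,1,0;0,0,1,1] (by decide) (by decide) (by decide) (by decide) (by decide) (by rw [hA]; decide) (by rw [hB]; decide))
    · exact Or.inl (iso_std_swap D repA h0 h1 rfl rfl !![0,0,0,1;0,0,1,1;1,1,0,0;0,1,0,0] !![0,0,1,1;0,0,0,1;1,1,0,0;1,0,0,0] (by decide) (by decide) (by decide) (by decide) (by decide) (by rw [hA]; decide) (by rw [hB]; decide))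
  · rcases hw1 with hB|hB|hB|hB|hB|hB|hB|hB|hB
    · exact Or.inl (iso_std_swap D repA h0 h1 rfl rfl !![0,0,1,0;0,0,0,1;0,1,0,0;1,0,0,0] !![0,0,0,1;0,0,1,0;1,0,0,0;0,1,0,0] (by decide) (by decide) (by decide) (by decide) (by decide) (by rw [hA]; decide) (by rw [hB]; decide))
    · exact Or.inr (iso_std_id D repB h0 h1 rfl rfl !![0,1,0,0;1,0,0,0;0,0,1,0;0,0,0,1] !![0,1,0,0;1,0,0,0;0,0,1,0;0,0,0,1] (by decide) (by decide) (by decide) (by decide) (by decide) (by rw [hA]; decide) (by rw [hB]; decide))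
    · exact Or.inr (iso_std_id D repB h0 h1 rfl rfl !![0,1,0,0;1,0,0,0;0,0,1,1;0,0,0,1] !![0,1,0,0;1,0,0,0;0,0,1,1;0,0,0,1] (by decide) (by decide) (by decide) (by decide) (by decide) (by rw [hA]; decide) (by rw [hB]; decide))
    · exact absurd (hA.trans hB.symm) hne
    · exact Or.inl (iso_std_id D repA h0 h1 rfl rfl !![0,1,0,0;1,0,0,0;0,0,1,0;0,0,0,1] !![0,1,0,0;1,0,0,0;0,0,1,0;0,0,0,1] (by decide) (by decide) (by decide) (by decide) (by decide) (by rw [hA]; decide) (by rw [hB]; decide))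
    · exact Or.inl (iso_std_id D repA h0 h1 rfl rfl !![0,1,0,0;1,0,0,0;0,0,1,1;0,0,0,1] !![0,1,0,0;1,0,0,0;0,0,1,1;0,0,0,1] (by decide) (by decide) (by decide) (by decide) (by decide) (by rw [hA]; decide) (by rw [hB]; decide))
    · exact Or.inl (iso_std_swap D repA h0 h1 rfl rfl !![0,0,1,0;0,0,0,1;1,1,0,0;1,0,0,0] !![0,0,0,1;0,0,1,1;1,0,0,0;0,1,0,0] (by decide) (by decide) (by decide) (by decide) (by decide) (by rw [hA]; decide) (by rw [hB]; decide))
    · exact Or.inr (iso_std_id D repB h0 h1 rfl rfl !![1,1,0,0;1,0,0,0;0,0,1,0;0,0,0,1] !![0,1,0,0;1,1,0,0;0,0,1,0;0,0,0,1] (by decide) (by decide) (by decide) (by decide) (by decide) (by rw [hA]; decide) (by rw [hB]; decide))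
    · exact Or.inr (iso_std_id D repB h0 h1 rfl rfl !![1,1,0,0;1,0,0,0;0,0,1,1;0,0,0,1] !![0,1,0,0;1,1,0,0;0,0,1,1;0,0,0,1] (by decide) (by decide) (by decide) (by decide) (by decide) (by rw [hA]; decide) (by rw [hB]; decide))
  · rcases hw1 with hB|hB|hB|hB|hB|hB|hB|hB|hB
    · exact Or.inr (iso_std_id D repB h0 h1 rfl rfl !![0,1,0,0;1,0,0,0;0,0,0,1;0,0,1,0] !![0,1,0,0;1,0,0,0;0,0,0,1;0,0,1,0] (by decide) (by decide) (by decide) (by decide) (by decide) (by rw [hA]; decide) (by rw [hB]; decide))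
    · exact Or.inl (iso_std_swap D repA h0 h1 rfl rfl !![0,0,0,1;0,0,1,0;0,1,0,0;1,0,0,0] !![0,0,0,1;0,0,1,0;0,1,0,0;1,0,0,0] (by decide) (by decide) (by decide) (by decide) (by decide) (by rw [hA]; decide) (by rw [hB]; decide))
    · exact Or.inr (iso_std_id D repB h0 h1 rfl rfl !![0,1,0,0;1,0,0,0;0,0,1,1;0,0,1,0] !![0,1,0,0;1,0,0,0;0,0,0,1;0,0,1,1] (by decide) (by decide) (by decide) (by decide) (by decide) (by rw [hA]; decide) (by rw [hB]; decide))
    · exact Or.inl (iso_std_id D repA h0 h1 rfl rfl !![0,1,0,0;1,0,0,0;0,0,0,1;0,0,1,0] !![0,1,0,0;1,0,0,0;0,0,0,1;0,0,1,0] (by decide) (by decide) (by decide) (by decide) (by decide) (by rw [hA]; decide) (by rw [hB]; decide))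
    · exact absurd (hA.trans hB.symm) hne
    · exact Or.inl (iso_std_id D repA h0 h1 rfl rfl !![0,1,0,0;1,0,0,0;0,0,1,1;0,0,1,0] !![0,1,0,0;1,0,0,0;0,0,0,1;0,0,1,1] (by decide) (by decide) (by decide) (by decide) (by decide) (by rw [hA]; decide) (by rw [hB]; decide))
    · exact Or.inr (iso_std_id D repB h0 h1 rfl rfl !![1,1,0,0;1,0,0,0;0,0,0,1;0,0,1,0] !![0,1,0,0;1,1,0,0;0,0,0,1;0,0,1,0] (by decide) (by decide) (by decide) (by decide) (by decide) (by rw [hA]; decide) (by rw [hB]; decide))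
    · exact Or.inl (iso_std_swap D repA h0 h1 rfl rfl !![0,0,0,1;0,0,1,0;1,1,0,0;1,0,0,0] !![0,0,0,1;0,0,1,1;0,1,0,0;1,0,0,0] (by decide) (by decide) (by decide) (by decide) (by decide) (by rw [hA]; decide) (by rw [hB]; decide))
    · exact Or.inr (iso_std_id D repB h0 h1 rfl rfl !![1,1,0,0;1,0,0,0;0,0,1,1;0,0,1,0] !![0,1,0,0;1,1,0,0;0,0,0,1;0,0,1,1] (by decide) (by decide) (by decide) (by decide) (by decide) (by rw [hA]; decide) (by rw [hB]; decide))
  · rcases hw1 with hB|hB|hB|hB|hB|hB|hB|hB|hB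
    · exact Or.inr (iso_std_id D repB h0 h1 rfl rfl !![0,1,0,0;1,0,0,0;0,0,0,1;0,0,1,1] !![0,1,0,0;1,0,0,0;0,0,1,1;0,0,1,0] (by decide) (by decide) (by decide) (by decide) (by decide) (by rw [hA]; decide) (by rw [hB]; decide))
    · exact Or.inr (iso_std_id D repB h0 h1 rfl rfl !![0,1,0,0;1,0,0,0;0,0,1,0;0,0,1,1] !![0,1,0,0;1,0,0,0;0,0,1,0;0,0,1,1] (by decide) (by decide) (by decide) (by decide) (by decide) (by rw [hA]; decide) (by rw [hB]; decide))
    · exact Or.inl (iso_std_swap D repA h0 h1 rfl rfl !![0,0,0,1;0,0,1,1;0,1,0,0;1,0,0,0] !![0,0,0,1;0,0,1,0;1,1,0,0;1,0,0,0] (by decide) (by decide) (by decide) (by decide) (by decide) (by rw [hA]; decide) (by rw [hB]; decide))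
    · exact Or.inl (iso_std_id D repA h0 h1 rfl rfl !![0,1,0,0;1,0,0,0;0,0,0,1;0,0,1,1] !![0,1,0,0;1,0,0,0;0,0,1,1;0,0,1,0] (by decide) (by decide) (by decide) (by decide) (by decide) (by rw [hA]; decide) (by rw [hB]; decide))
    · exact Or.inl (iso_std_id D repA h0 h1 rfl rfl !![0,1,0,0;1,0,0,0;0,0,1,0;0,0,1,1] !![0,1,0,0;1,0,0,0;0,0,1,0;0,0,1,1] (by decide) (by decide) (by decide) (by decide) (by decide) (by rw [hA]; decide) (by rw [hB]; decide))
    · exact absurd (hA.trans hB.symm) hne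
    · exact Or.inr (iso_std_id D repB h0 h1 rfl rfl !![1,1,0,0;1,0,0,0;0,0,0,1;0,0,1,1] !![0,1,0,0;1,1,0,0;0,0,1,1;0,0,1,0] (by decide) (by decide) (by decide) (by decide) (by decide) (by rw [hA]; decide) (by rw [hB]; decide))
    · exact Or.inr (iso_std_id D repB h0 h1 rfl rfl !![1,1,0,0;1,0,0,0;0,0,1,0;0,0,1,1] !![0,1,0,0;1,1,0,0;0,0,1,0;0,0,1,1] (by decide) (by decide) (by decide) (by decide) (by decide) (by rw [hA]; decide) (by rw [hB]; decide))
    · exact Or.inl (iso_std_swap D repA h0 h1 rfl rfl !![0,0,0,1;0,0,1,1;1,1,0,0;1,0,0,0] !![0,0,0,1;0,0,1,1;1,1,0,0;1,0,0,0] (by decide) (by decide) (by decide) (by decide) (by decide) (by rw [hA]; decide) (by rw [hB]; decide))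
  · rcases hw1 with hB|hB|hB|hB|hB|hB|hB|hB|hB
    · exact Or.inl (iso_std_swap D repA h0 h1 rfl rfl !![0,0,1,0;0,0,0,1;0,1,0,0;1,1,0,0] !![0,0,1,1;0,0,1,0;1,0,0,0;0,1,0,0] (by decide) (by decide) (by decide) (by decide) (by decide) (by rw [hA]; decide) (by rw [hB]; decide))
    · exact Or.inr (iso_std_id D repB h0 h1 rfl rfl !![0,1,0,0;1,1,0,0;0,0,1,0;0,0,0,1] !![1,1,0,0;1,0,0,0;0,0,1,0;0,0,0,1] (by decide) (by decide) (by decide) (by decide) (by decide) (by rw [hA]; decide) (by rw [hB]; decide))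
    · exact Or.inr (iso_std_id D repB h0 h1 rfl rfl !![0,1,0,0;1,1,0,0;0,0,1,1;0,0,0,1] !![1,1,0,0;1,0,0,0;0,0,1,1;0,0,0,1] (by decide) (by decide) (by decide) (by decide) (by decide) (by rw [hA]; decide) (by rw [hB]; decide))
    · exact Or.inl (iso_std_swap D repA h0 h1 rfl rfl !![0,0,1,0;0,0,0,1;1,0,0,0;1,1,0,0] !![0,0,1,0;0,0,1,1;1,0,0,0;0,1,0,0] (by decide) (by decide) (by decide) (by decide) (by decide) (by rw [hA]; decide) (by rw [hB]; decide))
    · exact Or.inr (iso_std_id D repB h0 h1 rfl rfl !![1,0,0,0;1,1,0,0;0,0,1,0;0,0,0,1] !![1,0,0,0;1,1,0,0;0,0,1,0;0,0,0,1] (by decide) (by decide) (by decide) (by decide) (by decide) (by rw [hA]; decide) (by rw [hB]; decide))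
    · exact Or.inr (iso_std_id D repB h0 h1 rfl rfl !![1,0,0,0;1,1,0,0;0,0,1,1;0,0,0,1] !![1,0,0,0;1,1,0,0;0,0,1,1;0,0,0,1] (by decide) (by decide) (by decide) (by decide) (by decide) (by rw [hA]; decide) (by rw [hB]; decide))
    · exact absurd (hA.trans hB.symm) hne
    · exact Or.inl (iso_std_id D repA h0 h1 rfl rfl !![0,1,0,0;1,1,0,0;0,0,1,0;0,0,0,1] !![1,1,0,0;1,0,0,0;0,0,1,0;0,0,0,1] (by decide) (by decide) (by decide) (by decide) (by decide) (by rw [hA]; decide) (by rw [hB]; decide))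
    · exact Or.inl (iso_std_id D repA h0 h1 rfl rfl !![0,1,0,0;1,1,0,0;0,0,1,1;0,0,0,1] !![1,1,0,0;1,0,0,0;0,0,1,1;0,0,0,1] (by decide) (by decide) (by decide) (by decide) (by decide) (by rw [hA]; decide) (by rw [hB]; decide))
  · rcases hw1 with hB|hB|hB|hB|hB|hB|hB|hB|hB
    · exact Or.inr (iso_std_id D repB h0 h1 rfl rfl !![0,1,0,0;1,1,0,0;0,0,0,1;0,0,1,0] !![1,1,0,0;1,0,0,0;0,0,0,1;0,0,1,0] (by decide) (by decide) (by decide) (by decide) (by decide) (by rw [hA]; decide) (by rw [hB]; decide))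
    · exact Or.inl (iso_std_swap D repA h0 h1 rfl rfl !![0,0,0,1;0,0,1,0;0,1,0,0;1,1,0,0] !![0,0,1,1;0,0,1,0;0,1,0,0;1,0,0,0] (by decide) (by decide) (by decide) (by decide) (by decide) (by rw [hA]; decide) (by rw [hB]; decide))
    · exact Or.inr (iso_std_id D repB h0 h1 rfl rfl !![0,1,0,0;1,1,0,0;0,0,1,1;0,0,1,0] !![1,1,0,0;1,0,0,0;0,0,0,1;0,0,1,1] (by decide) (by decide) (by decide) (by decide) (by decide) (by rw [hA]; decide) (by rw [hB]; decide))
    · exact Or.inr (iso_std_id D repB h0 h1 rfl rfl !![1,0,0,0;1,1,0,0;0,0,0,1;0,0,1,0] !![1,0,0,0;1,1,0,0;0,0,0,1;0,0,1,0] (by decide) (by decide) (by decide) (by decide) (by decide) (by rw [hA]; decide) (by rw [hB]; decide))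
    · exact Or.inl (iso_std_swap D repA h0 h1 rfl rfl !![0,0,0,1;0,0,1,0;1,0,0,0;1,1,0,0] !![0,0,1,0;0,0,1,1;0,1,0,0;1,0,0,0] (by decide) (by decide) (by decide) (by decide) (by decide) (by rw [hA]; decide) (by rw [hB]; decide))
    · exact Or.inr (iso_std_id D repB h0 h1 rfl rfl !![1,0,0,0;1,1,0,0;0,0,1,1;0,0,1,0] !![1,0,0,0;1,1,0,0;0,0,0,1;0,0,1,1] (by decide) (by decide) (by decide) (by decide) (by decide) (by rw [hA]; decide) (by rw [hB]; decide))
    · exact Or.inl (iso_std_id D repA h0 h1 rfl rfl !![0,1,0,0;1,1,0,0;0,0,0,1;0,0,1,0] !![1,1,0,0;1,0,0,0;0,0,0,1;0,0,1,0] (by decide) (by decide) (by decide) (by decide) (by decide) (by rw [hA]; decide) (by rw [hB]; decide))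
    · exact absurd (hA.trans hB.symm) hne
    · exact Or.inl (iso_std_id D repA h0 h1 rfl rfl !![0,1,0,0;1,1,0,0;0,0,1,1;0,0,1,0] !![1,1,0,0;1,0,0,0;0,0,0,1;0,0,1,1] (by decide) (by decide) (by decide) (by decide) (by decide) (by rw [hA]; decide) (by rw [hB]; decide))
  · rcases hw1 with hB|hB|hB|hB|hB|hB|hB|hB|hB
    · exact Or.inr (iso_std_id D repB h0 h1 rfl rfl !![0,1,0,0;1,1,0,0;0,0,0,1;0,0,1,1] !![1,1,0,0;1,0,0,0;0,0,1,1;0,0,1,0] (by decide) (by decide) (by decide) (by decide) (by decide) (by rw [hA]; decide) (by rw [hB]; decide))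
    · exact Or.inr (iso_std_id D repB h0 h1 rfl rfl !![0,1,0,0;1,1,0,0;0,0,1,0;0,0,1,1] !![1,1,0,0;1,0,0,0;0,0,1,0;0,0,1,1] (by decide) (by decide) (by decide) (by decide) (by decide) (by rw [hA]; decide) (by rw [hB]; decide))
    · exact Or.inl (iso_std_swap D repA h0 h1 rfl rfl !![0,0,0,1;0,0,1,1;0,1,0,0;1,1,0,0] !![0,0,1,1;0,0,1,0;1,1,0,0;1,0,0,0] (by decide) (by decide) (by decide) (by decide) (by decide) (by rw [hA]; decide) (by rw [hB]; decide))
    · exact Or.inr (iso_std_id D repB h0 h1 rfl rfl !![1,0,0,0;1,1,0,0;0,0,0,1;0,0,1,1] !![1,0,0,0;1,1,0,0;0,0,1,1;0,0,1,0] (by decide) (by decide) (by decide) (by decide) (by decide) (by rw [hA]; decide) (by rw [hB]; decide))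
    · exact Or.inr (iso_std_id D repB h0 h1 rfl rfl !![1,0,0,0;1,1,0,0;0,0,1,0;0,0,1,1] !![1,0,0,0;1,1,0,0;0,0,1,0;0,0,1,1] (by decide) (by decide) (by decide) (by decide) (by decide) (by rw [hA]; decide) (by rw [hB]; decide))
    · exact Or.inl (iso_std_swap D repA h0 h1 rfl rfl !![0,0,0,1;0,0,1,1;1,0,0,0;1,1,0,0] !![0,0,1,0;0,0,1,1;1,1,0,0;1,0,0,0] (by decide) (by decide) (by decide) (by decide) (by decide) (by rw [hA]; decide) (by rw [hB]; decide))
    · exact Or.inl (iso_std_id D repA h0 h1 rfl rfl !![0,1,0,0;1,1,0,0;0,0,0,1;0,0,1,1] !![1,1,0,0;1,0,0,0;0,0,1,1;0,0,1,0] (by decide) (by decide) (by decide) (by decide) (by decide) (by rw [hA]; decide) (by rw [hB]; decide))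
    · exact Or.inl (iso_std_id D repA h0 h1 rfl rfl !![0,1,0,0;1,1,0,0;0,0,1,0;0,0,1,1] !![1,1,0,0;1,0,0,0;0,0,1,0;0,0,1,1] (by decide) (by decide) (by decide) (by decide) (by decide) (by rw [hA]; decide) (by rw [hB]; decide))
    · exact absurd (hA.trans hB.symm) hne

lemma fin2_cases : ∀ j : Fin 2, j ≠ 0 → j = 1 := by decide

lemma notIso : ¬ FTL2DesignIso repA repB := by
  rintro ⟨g, τ, σ, hU, hw⟩
  have hsum : g (repA.1.2 0 + repA.1.2 1) = repB.1.2 (σ 0) + repB.1.2 (σ 1) := by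
    rw [map_add, hw 0, hw 1]
  have hσ : repB.1.2 (σ 0) + repB.1.2 (σ 1) = ![1,1,1,1] := by
    by_cases h : σ 0 = 0
    · have h1 : σ 1 = 1 := by
        apply fin2_cases
        intro hc
        exact absurd (σ.injective (hc.trans h.symm)) (by decide)
      rw [h, h1]
      decide
    · have h0' : σ 0 = 1 := fin2_cases _ h
      have h1 : σ 1 = 0 := by
        by_contra hc
        exact absurd (σ.injective (h0'.trans (fin2_cases _ hc).symm)) (by decide)
      rw [h0', h1]
      decide
  have hmem : repA.1.2 0 + repA.1.2 1 ∈ repA.1.1 1 := mem_U1std.mpr (by decide)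
  have hmm : g (repA.1.2 0 + repA.1.2 1) ∈ repB.1.1 (τ 1) := by
    rw [← hU 1]
    exact Submodule.mem_map_of_mem hmem
  rw [hsum, hσ] at hmm
  by_cases h : τ 1 = 0
  · rw [h] at hmm
    exact absurd (mem_U0std.mp hmm) (by decide)
  · rw [fin2_cases _ h] at hmm
    exact absurd (mem_U1std.mp hmm) (by decide)

/-- There are exactly 2 isomorphism classes of regular 16-run `4^2 2^2` designs of
resolution at least III: there are 2 designs such that every design is isomorphic to
exactly one of them. -/
theorem two_isoClasses_of_four_two_two_two :
    ∃ reps : Fin 2 → FTL2Design 2,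
      ∀ D : FTL2Design 2, ∃! j : Fin 2, FTL2DesignIso D (reps j) := by
  refine ⟨![repA, repB], fun D => ?_⟩
  obtain ⟨E, hDE, h0, h1⟩ := standardize D
  rcases std_classify E h0 h1 with h | h
  · refine ⟨0, iso_trans hDE h, ?_⟩
    intro j hj
    fin_cases j
    · rfl
    · exact absurd (iso_symm (iso_trans (iso_symm hj) (iso_trans hDE h))) notIso
  · refine ⟨1, iso_trans hDE h, ?_⟩
    intro j hj
    fin_cases j
    · exact absurd (iso_trans (iso_symm hj) (iso_trans hDE h)) notIso
    · rfl
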